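/- arXiv:2403.19448 — 6 statements merged into one kernel-verified Lean document; each statement's English description precedes it below -/
import Mathlib

section
/- Let X be a finite set and let μ, ν be probability distributions on X with ν(x) > 0 whenever μ(x) > 0. Let c > 1 and set δ = ((c-1)/(c+1)) · min{μ(x) : μ(x) > 0}. If ‖μ - ν‖_∞ ≤ δ, then D_KL(μ, ν) ≤ c · ‖μ - ν‖_TV, where ‖μ - ν‖_TV = (1/2)·∑_x |μ(x) - ν(x)|. -/
open Finset

/-- Kullback-Leibler divergence on a finite set (with convention 0·log(0/0)=0,
since terms with `μ x = 0` vanish). -/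
noncomputable def klDiv {X : Type*} [Fintype X] (μ ν : X → ℝ) : ℝ :=
  ∑ x, μ x * Real.log (μ x / ν x)

/-- Total variation norm of the difference of two vectors. -/
noncomputable def tvDist {X : Type*} [Fintype X] (μ ν : X → ℝ) : ℝ :=
  (1 / 2) * ∑ x, |μ x - ν x|

/-!
On the support of `μ`, `log t ≤ t - 1` gives `μ log(μ/ν) ≤ (μ - ν) + (μ - ν)² / ν`. The hypothesis
`‖μ - ν‖_∞ ≤ δ` forces `ν ≥ 2μ / (c + 1)` there, hence `|μ - ν| ≤ (c - 1)/2 · ν`, so the quadratic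
term is at most `(c - 1)/2 · |μ - ν|`. Summing, the linear terms contribute at most `‖μ - ν‖_TV`
(a signed sum of `μ - ν` over any set is bounded by the TV norm, as `∑ (μ - ν) = 0`) and the
absolute values at most `(c - 1)/2 · 2‖μ - ν‖_TV`.
-/

open Real

theorem mul_log_div_le_sub_add_sq_div {a b : ℝ} (ha : 0 < a) (hb : 0 < b) :
    a * log (a / b) ≤ (a - b) + (a - b) ^ 2 / b := by
  calc a * log (a / b) ≤ a * (a / b - 1) :=
        mul_le_mul_of_nonneg_left (log_le_sub_one_of_pos (div_pos ha hb)) ha.le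
    _ = (a - b) + (a - b) ^ 2 / b := by field_simp; ring

theorem mul_log_div_le_of_abs_sub_le {a b c : ℝ} (ha : 0 < a) (hc : 1 ≤ c)
    (h : |a - b| ≤ (c - 1) / (c + 1) * a) :
    a * log (a / b) ≤ (a - b) + (c - 1) / 2 * |a - b| := by
  have hc1 : 0 < c + 1 := by linarith
  have hsub := le_abs_self (a - b)
  have hmul : (c + 1) * |a - b| ≤ (c - 1) * a :=
    calc (c + 1) * |a - b| ≤ (c + 1) * ((c - 1) / (c + 1) * a) := by gcongr
      _ = (c - 1) * a := by field_simp
  have hb_lower : 2 * a ≤ (c + 1) * b := by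
    nlinarith [mul_le_mul_of_nonneg_left hsub hc1.le]
  have hb : 0 < b := by nlinarith
  have habs : 2 * |a - b| ≤ (c - 1) * b := by
    nlinarith [mul_le_mul_of_nonneg_left (show a ≤ b + |a - b| by linarith)
      (show 0 ≤ c - 1 by linarith)]
  calc a * log (a / b) ≤ (a - b) + (a - b) ^ 2 / b := mul_log_div_le_sub_add_sq_div ha hb
    _ ≤ (a - b) + (c - 1) / 2 * |a - b| := by
      gcongr
      rw [div_le_iff₀ hb, ← sq_abs, sq]
      nlinarith [abs_nonneg (a - b)]

theorem sum_le_half_sum_abs_of_sum_eq_zero {ι : Type*} [Fintype ι] [DecidableEq ι] (d : ι → ℝ)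
    (hd : ∑ i, d i = 0) (T : Finset ι) :
    ∑ i ∈ T, d i ≤ (1 / 2) * ∑ i, |d i| := by
  have hsplit := T.sum_add_sum_compl d
  have habs := T.sum_add_sum_compl (fun i => |d i|)
  have hT : ∑ i ∈ T, d i ≤ ∑ i ∈ T, |d i| := sum_le_sum fun i _ => le_abs_self (d i)
  have hTc : -∑ i ∈ Tᶜ, d i ≤ ∑ i ∈ Tᶜ, |d i| := by
    rw [← sum_neg_distrib]
    exact sum_le_sum fun i _ => neg_le_abs (d i)
  linarith

theorem stmt0_general {X : Type*} [Fintype X] (μ ν : X → ℝ)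
    (hμ0 : ∀ x, 0 ≤ μ x)
    (hμ1 : ∑ x, μ x = 1) (hν1 : ∑ x, ν x = 1)
    (c : ℝ) (hc : 1 < c)
    (S : Finset X) (hS : ∀ x, x ∈ S ↔ 0 < μ x) (hSne : S.Nonempty)
    (δ : ℝ) (hδ : δ = (c - 1) / (c + 1) * S.inf' hSne μ)
    (hinf : ∀ x, |μ x - ν x| ≤ δ) :
    klDiv μ ν ≤ c * tvDist μ ν := by
  classical
  have hsupp : ∀ x ∉ S, μ x = 0 := fun x hx =>
    le_antisymm (not_lt.mp (mt (hS x).mpr hx)) (hμ0 x)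
  have hclose : ∀ x ∈ S, |μ x - ν x| ≤ (c - 1) / (c + 1) * μ x := fun x hx =>
    (hinf x).trans <| hδ ▸
      mul_le_mul_of_nonneg_left (S.inf'_le μ hx) (div_nonneg (by linarith) (by linarith))
  have hsum : ∑ x, (μ x - ν x) = 0 := by rw [sum_sub_distrib, hμ1, hν1, sub_self]
  calc klDiv μ ν = ∑ x ∈ S, μ x * log (μ x / ν x) :=
        (sum_subset S.subset_univ fun x _ hx => by rw [hsupp x hx, zero_mul]).symm
    _ ≤ ∑ x ∈ S, ((μ x - ν x) + (c - 1) / 2 * |μ x - ν x|) := sum_le_sum fun x hx =>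
        mul_log_div_le_of_abs_sub_le ((hS x).mp hx) hc.le (hclose x hx)
    _ = ∑ x ∈ S, (μ x - ν x) + (c - 1) / 2 * ∑ x ∈ S, |μ x - ν x| := by
        rw [sum_add_distrib, mul_sum]
    _ ≤ tvDist μ ν + (c - 1) / 2 * ∑ x, |μ x - ν x| := by
        gcongr
        · exact sum_le_half_sum_abs_of_sum_eq_zero _ hsum S
        · exact subset_univ S
    _ = c * tvDist μ ν := by rw [tvDist]; ring

theorem stmt0 {X : Type*} [Fintype X] (μ ν : X → ℝ)
    (hμ0 : ∀ x, 0 ≤ μ x) (hν0 : ∀ x, 0 ≤ ν x)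
    (hμ1 : ∑ x, μ x = 1) (hν1 : ∑ x, ν x = 1)
    (hac : ∀ x, 0 < μ x → 0 < ν x)
    (c : ℝ) (hc : 1 < c)
    (S : Finset X) (hS : ∀ x, x ∈ S ↔ 0 < μ x) (hSne : S.Nonempty)
    (δ : ℝ) (hδ : δ = (c - 1) / (c + 1) * S.inf' hSne μ)
    (hinf : ∀ x, |μ x - ν x| ≤ δ) :
    klDiv μ ν ≤ c * tvDist μ ν :=
  stmt0_general μ ν hμ0 hμ1 hν1 c hc S hS hSne δ hδ hinf
end

section
/- Let X be a finite set and μ ∈ Δ_X a probability distribution. For any ν ∈ Δ_X with ν(x) > 0 whenever μ(x) > 0 and ‖μ - ν‖_∞ < m, where m = min{μ(x) : μ(x) > 0}, it holds that D_KL(μ, ν) ≤ ((m + ‖μ-ν‖_∞)/(m - ‖μ-ν‖_∞)) · ‖μ - ν‖_TV. -/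
open Finset

theorem stmt1 {X : Type*} [Fintype X] [Nonempty X] (μ ν : X → ℝ)
    (hμ0 : ∀ x, 0 ≤ μ x) (hν0 : ∀ x, 0 ≤ ν x)
    (hμ1 : ∑ x, μ x = 1) (hν1 : ∑ x, ν x = 1)
    (hac : ∀ x, 0 < μ x → 0 < ν x)
    (S : Finset X) (hS : ∀ x, x ∈ S ↔ 0 < μ x) (hSne : S.Nonempty)
    (m : ℝ) (hm : m = S.inf' hSne μ)
    (e : ℝ) (he : e = Finset.univ.sup' Finset.univ_nonempty (fun x => |μ x - ν x|))
    (hlt : e < m) :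
    klDiv μ ν ≤ (m + e) / (m - e) * tvDist μ ν := by
  classical
  have hme : 0 < m - e := sub_pos.mpr hlt
  have habs : ∀ x, |μ x - ν x| ≤ e := fun x => by
    rw [he]; exact Finset.le_sup' (fun x => |μ x - ν x|) (Finset.mem_univ x)
  have he0 : 0 ≤ e := le_trans (abs_nonneg _) (habs (Classical.arbitrary X))
  have hμoff : ∀ x, x ∉ S → μ x = 0 := fun x hx =>
    le_antisymm (not_lt.mp (fun h => hx ((hS x).mpr h))) (hμ0 x)
  have hν_lb : ∀ x ∈ S, m - e ≤ ν x := by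
    intro x hx
    have h1 : m ≤ μ x := hm ▸ Finset.inf'_le _ hx
    have h2 : μ x - ν x ≤ e := (abs_le.mp (habs x)).2
    linarith
  have hνpos : ∀ x ∈ S, 0 < ν x := fun x hx => lt_of_lt_of_le hme (hν_lb x hx)
  set A := ∑ x ∈ S, |μ x - ν x| with hA
  set B := ∑ x ∈ Sᶜ, |μ x - ν x| with hB
  have hA0 : 0 ≤ A := Finset.sum_nonneg fun x _ => abs_nonneg _
  have hsplit : A + B = ∑ x, |μ x - ν x| := Finset.sum_add_sum_compl S _
  have hμS : ∑ x ∈ S, μ x = 1 := by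
    rw [← hμ1]
    exact Finset.sum_subset (Finset.subset_univ S) (fun x _ hx => hμoff x hx)
  have hBν : B = 1 - ∑ x ∈ S, ν x := by
    have h1 : B = ∑ x ∈ Sᶜ, ν x := by
      apply Finset.sum_congr rfl
      intro x hx
      rw [hμoff x (Finset.mem_compl.mp hx), zero_sub, abs_neg, abs_of_nonneg (hν0 x)]
    have h2 : ∑ x ∈ S, ν x + ∑ x ∈ Sᶜ, ν x = 1 := by
      rw [Finset.sum_add_sum_compl]; exact hν1
    linarith
  have hBsum : ∑ x ∈ S, (μ x - ν x) = B := by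
    rw [Finset.sum_sub_distrib, hμS, hBν]
  have hBA : B ≤ A := by
    calc B = ∑ x ∈ S, (μ x - ν x) := hBsum.symm
    _ ≤ |∑ x ∈ S, (μ x - ν x)| := le_abs_self _
    _ ≤ ∑ x ∈ S, |μ x - ν x| := Finset.abs_sum_le_sum_abs _ _
  have hB0 : 0 ≤ B := Finset.sum_nonneg fun x _ => abs_nonneg _
  -- restrict KL to S
  have hkl : klDiv μ ν = ∑ x ∈ S, μ x * Real.log (μ x / ν x) := by
    rw [klDiv]
    symm
    apply Finset.sum_subset (Finset.subset_univ S)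
    intro x _ hx
    rw [hμoff x hx, zero_mul]
  -- pointwise bound on S
  have hpt : ∀ x ∈ S, μ x * Real.log (μ x / ν x) ≤
      (μ x - ν x) + (e / (m - e)) * |μ x - ν x| := by
    intro x hx
    have hν := hνpos x hx
    have hμ := (hS x).mp hx
    have hlog : Real.log (μ x / ν x) ≤ μ x / ν x - 1 :=
      Real.log_le_sub_one_of_pos (div_pos hμ hν)
    have h1 : μ x * Real.log (μ x / ν x) ≤ μ x * (μ x / ν x - 1) :=
      mul_le_mul_of_nonneg_left hlog hμ.le
    have h2 : μ x * (μ x / ν x - 1) = (μ x - ν x) + (μ x - ν x) ^ 2 / ν x := by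
      field_simp; ring
    have h3 : (μ x - ν x) ^ 2 / ν x ≤ (e / (m - e)) * |μ x - ν x| := by
      rw [div_mul_eq_mul_div]
      apply div_le_div₀ (by positivity) ?_ hme (hν_lb x hx)
      calc (μ x - ν x) ^ 2 = |μ x - ν x| * |μ x - ν x| := by
            rw [abs_mul_abs_self]; ring
      _ ≤ e * |μ x - ν x| :=
            mul_le_mul_of_nonneg_right (habs x) (abs_nonneg _)
    linarith
  have hsum : klDiv μ ν ≤ B + (e / (m - e)) * A := by
    calc klDiv μ ν = ∑ x ∈ S, μ x * Real.log (μ x / ν x) := hkl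
    _ ≤ ∑ x ∈ S, ((μ x - ν x) + (e / (m - e)) * |μ x - ν x|) := Finset.sum_le_sum hpt
    _ = B + (e / (m - e)) * A := by rw [Finset.sum_add_distrib, ← Finset.mul_sum, hBsum]
  have htv : tvDist μ ν = (1 / 2) * (A + B) := by rw [tvDist, hsplit]
  rw [htv]
  refine le_trans hsum ?_
  have h2 : (m + e) / (m - e) * (1 / 2 * (A + B)) =
      (m + e) * (1 / 2 * (A + B)) / (m - e) := div_mul_eq_mul_div _ _ _
  rw [h2, le_div_iff₀ hme, add_mul, div_mul_eq_mul_div,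
    div_mul_cancel₀ _ (ne_of_gt hme)]
  nlinarith [mul_nonneg he0 hB0, mul_nonneg hme.le (sub_nonneg.mpr hBA)]
  done
end

section
/- Let P ⊆ ℝ^X be a polytope, c ∈ ℝ^X, and let F* be the face of maximizers of μ ↦ cᵀμ over P. Suppose F* ≠ P. Let ‖·‖ be a semi-norm on ℝ^X and define Δ = min{(cᵀμ* - cᵀμ)/‖μ* - μ‖ : μ* a vertex of F*, μ a neighboring vertex of μ* not in F*} (with c/0 := +∞). Then Δ > 0 and for every μ ∈ P, cᵀμ* - cᵀμ ≥ Δ · inf_{μ*∈F*} ‖μ* - μ‖ where μ* ∈ F* on the left is any maximizer. -/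
open Finset

/-- The linear objective `μ ↦ cᵀμ`. -/
def linVal {X : Type*} [Fintype X] (c μ : X → ℝ) : ℝ := ∑ x, c x * μ x

/-!
Every polytope `P` lies in the cone at a vertex `u` spanned by the edges of `P` at `u`: take an
irredundant set of generators of the cone spanned by `P - u`; a generator `g` is not a nonnegative
combination of the others and `0` is not in their convex hull (as `u` is extreme), so after
projecting along `g` a separating functional vanishes on `g`, is negative on the other generators,
and exposes the edge in direction `g`.

Hence if a closed convex cone `K` contains the directions of all edges leaving the optimal face
`F*`, then `P ⊆ F* + K`: a functional `f` separating a point of `P` from the closed convex set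
`F* + K` is `≤ 0` on `K`, so at a vertex `u` of `F*` maximizing `f` every edge direction has
`f ≤ 0`, and `f ≤ f u` on all of `P`. By the choice of `Δ`, the closed cone
`{y | Δ N y + cᵀy ≤ 0}` is such a `K`; writing `μ = p + k` with `p ∈ F*` gives
`cᵀμ* - cᵀμ = -cᵀk ≥ Δ N k ≥ Δ · inf_{ν ∈ F*} N (ν - μ)`.
-/

open Set Pointwise

namespace PointedCone

section OrderedSemiring

variable {R E : Type*} [Semiring R] [PartialOrder R] [IsOrderedRing R] [AddCommMonoid E]
  [Module R E]

theorem exists_subset_hull_eq_forall_notMem_hull_erase [DecidableEq E] (s : Finset E) :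
    ∃ G ⊆ s, hull R (G : Set E) = hull R (s : Set E) ∧
      ∀ g ∈ G, g ∉ hull R (G.erase g : Set E) := by
  obtain ⟨G, hG, hmin⟩ := Finset.exists_min_image
    (s.powerset.filter fun G : Finset E => hull R (G : Set E) = hull R (s : Set E)) Finset.card
    ⟨s, by simp⟩
  rw [Finset.mem_filter, Finset.mem_powerset] at hG
  refine ⟨G, hG.1, hG.2, fun g hg hgG => ?_⟩
  have herase : hull R (G.erase g : Set E) = hull R (s : Set E) := by
    refine le_antisymm (hG.2 ▸ Submodule.span_mono (by simp)) (hG.2 ▸ Submodule.span_le.2 ?_)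
    intro h hh
    obtain rfl | hne := eq_or_ne h g
    · exact hgG
    · exact subset_hull (Finset.mem_erase.2 ⟨hne, hh⟩)
  have := hmin (G.erase g)
    (Finset.mem_filter.2 ⟨Finset.mem_powerset.2 ((G.erase_subset g).trans hG.1), herase⟩)
  exact (Finset.card_erase_lt_of_mem hg).not_ge this

end OrderedSemiring

variable {E : Type*} [AddCommGroup E] [Module ℝ E]

theorem convexHull_subset_hull (s : Set E) : convexHull ℝ s ⊆ hull ℝ s :=
  convexHull_min subset_hull (hull ℝ s).convex

theorem map_nonpos_of_mem_hull {f : E →ₗ[ℝ] ℝ} {s : Set E} (hs : ∀ x ∈ s, f x ≤ 0) {x : E}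
    (hx : x ∈ hull ℝ s) : f x ≤ 0 := by
  induction hx using Submodule.span_induction with
  | mem x hx => exact hs x hx
  | zero => simp
  | add x y _ _ hx hy => rw [map_add]; linarith
  | smul a x _ hx =>
    rw [← Nonneg.coe_smul, map_smul, smul_eq_mul]
    exact mul_nonpos_of_nonneg_of_nonpos a.2 hx

theorem eq_zero_of_mem_hull_of_map_eq_zero {f : E →ₗ[ℝ] ℝ} {s : Finset E}
    (hs : ∀ x ∈ s, f x < 0) {x : E} (hx : x ∈ hull ℝ (s : Set E)) (hfx : f x = 0) : x = 0 := by
  obtain ⟨a, -, rfl⟩ := Submodule.mem_span_finset.1 hx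
  have hterm : ∀ y ∈ s, (a y : ℝ) * f y ≤ 0 :=
    fun y hy => mul_nonpos_of_nonneg_of_nonpos (a y).2 (hs y hy).le
  simp only [map_sum, ← Nonneg.coe_smul, map_smul, smul_eq_mul] at hfx
  have ha : ∀ y ∈ s, a y = 0 := fun y hy => by
    have := (Finset.sum_eq_zero_iff_of_nonpos hterm).1 hfx y hy
    exact Subtype.ext ((mul_eq_zero.1 this).resolve_right (hs y hy).ne)
  exact Finset.sum_eq_zero fun y hy => by rw [ha y hy, zero_smul]

end PointedCone

section ExtremePoints

variable {E : Type*} [AddCommGroup E] [Module ℝ E]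

theorem zero_notMem_convexHull_of_mem_extremePoints {P G : Set E} (hP : Convex ℝ P) {u : E}
    (hu : u ∈ P.extremePoints ℝ) (hG : ∀ g ∈ G, g ≠ 0 ∧ u + g ∈ P) :
    (0 : E) ∉ convexHull ℝ G := by
  intro h0
  have hsub : u +ᵥ G ⊆ P \ {u} := by
    rintro _ ⟨g, hg, rfl⟩
    exact ⟨(hG g hg).2, by simpa [vadd_eq_add] using (hG g hg).1⟩
  have hu' : u ∈ convexHull ℝ (u +ᵥ G) := by
    rw [convexHull_vadd]
    simpa using vadd_mem_vadd_set (a := u) h0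
  exact ((hP.mem_extremePoints_iff_mem_sdiff_convexHull_sdiff).1 hu).2 (convexHull_mono hsub hu')

theorem le_one_of_add_smul_sub_mem {P : Set E} {u w : E} (hu : u ∈ P)
    (hw : w ∈ P.extremePoints ℝ) (huw : u ≠ w) {s : ℝ} (hs : u + s • (w - u) ∈ P) : s ≤ 1 := by
  by_contra! h1
  have hs0 : 0 < s := one_pos.trans h1
  have hmem : w ∈ openSegment ℝ u (u + s • (w - u)) := by
    refine ⟨1 - s⁻¹, s⁻¹, by simp [inv_lt_one_of_one_lt₀ h1], by positivity, by ring, ?_⟩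
    rw [smul_add, smul_smul, inv_mul_cancel₀ hs0.ne', one_smul]
    module
  exact huw (hw.2 hu hs hmem)

end ExtremePoints

section Polytope

variable {E : Type*} [NormedAddCommGroup E] [NormedSpace ℝ E]

theorem exists_clm_eq_zero_and_neg_of_notMem_hull [DecidableEq E] {G : Finset E}
    (hG : (0 : E) ∉ convexHull ℝ (G : Set E)) {g : E} (hg : g ∈ G)
    (hgG : g ∉ PointedCone.hull ℝ (G.erase g : Set E)) :
    ∃ F : E →L[ℝ] ℝ, F g = 0 ∧ ∀ h ∈ G.erase g, F h < 0 := by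
  have hg0 : g ≠ 0 := fun h => hG (h ▸ subset_convexHull ℝ _ hg)
  obtain ⟨ψ, hψ⟩ := SeparatingDual.exists_eq_one (R := ℝ) hg0
  set π : E →L[ℝ] E := ContinuousLinearMap.id ℝ E - ψ.smulRight g
  have hπ : ∀ y, π y = y - ψ y • g := fun y => rfl
  have h0Q : (0 : E) ∉ convexHull ℝ (π '' (G.erase g : Set E)) := by
    rw [← ContinuousLinearMap.coe_coe π, ← LinearMap.image_convexHull]
    rintro ⟨z, hz, hπz⟩
    set t := ψ z
    have hzg : z = t • g := sub_eq_zero.1 ((hπ z).symm.trans hπz)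
    rcases lt_or_ge 0 t with ht | ht
    · have hmem := (PointedCone.hull ℝ (G.erase g : Set E)).smul_mem (inv_nonneg.2 ht.le)
        (PointedCone.convexHull_subset_hull _ hz)
      rw [hzg, smul_smul, inv_mul_cancel₀ ht.ne', one_smul] at hmem
      exact hgG hmem
    · have hden : 0 < 1 - t := by linarith
      have hcomb : (1 - t)⁻¹ • z + (-t / (1 - t)) • g = 0 := by
        rw [hzg, smul_smul, ← add_smul, show (1 - t)⁻¹ * t + -t / (1 - t) = 0 by ring,
          zero_smul]
      refine hG (hcomb ▸ convex_convexHull ℝ _ (convexHull_mono (by simp) hz)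
        (subset_convexHull ℝ _ hg) (inv_nonneg.2 hden.le) (div_nonneg (neg_nonneg.2 ht) hden.le)
        ?_)
      rw [inv_eq_one_div, ← add_div, div_eq_one_iff_eq hden.ne']
      ring
  obtain ⟨f, r, hfQ, hr⟩ := geometric_hahn_banach_closed_point (convex_convexHull ℝ _)
    (((G.erase g).finite_toSet.image π).isClosed_convexHull ℝ) h0Q
  refine ⟨f.comp π, by simp [hπ, hψ], fun h hh => ?_⟩
  rw [map_zero] at hr
  exact (hfQ _ (subset_convexHull ℝ _ (mem_image_of_mem π hh))).trans hr

theorem isExposed_segment_of_map_eq_zero_of_map_neg {P : Set E} (hP : Convex ℝ P) {u v : E}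
    (hu : u ∈ P) (hv : v ∈ P.extremePoints ℝ) (huv : u ≠ v) {s : Finset E}
    (hcone : ∀ x ∈ P, x - u ∈ PointedCone.hull ℝ (insert (v - u) (s : Set E)))
    {F : E →L[ℝ] ℝ} (hFv : F (v - u) = 0) (hFs : ∀ h ∈ s, F h < 0) :
    IsExposed ℝ P (segment ℝ u v) := by
  have hmax : ∀ x ∈ P, F x ≤ F u := fun x hx => by
    have := PointedCone.map_nonpos_of_mem_hull (f := (F : E →ₗ[ℝ] ℝ)) ?_ (hcone x hx)
    · simpa [sub_nonpos] using this
    · rintro y (rfl | hy)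
      · exact hFv.le
      · exact (hFs y hy).le
  refine fun _ => ⟨F, Subset.antisymm (fun x hx => ⟨hP.segment_subset hu hv.1 hx, ?_⟩) ?_⟩
  · rw [segment_eq_image'] at hx
    obtain ⟨θ, -, rfl⟩ := hx
    intro y hy
    simpa [hFv] using hmax y hy
  · rintro x ⟨hxP, hxmax⟩
    obtain ⟨a, y, hy, hxy⟩ := Submodule.mem_span_insert.1 (hcone x hxP)
    have hFy : F y = 0 := by
      have h3 : F (x - u) = (a : ℝ) * F (v - u) + F y := by
        rw [hxy, map_add, ← Nonneg.coe_smul, map_smul, smul_eq_mul]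
      rw [map_sub, hFv, mul_zero, zero_add] at h3
      linarith [hxmax u hu, hmax x hxP]
    have hy0 := PointedCone.eq_zero_of_mem_hull_of_map_eq_zero (f := (F : E →ₗ[ℝ] ℝ)) hFs hy hFy
    have hx : x = u + (a : ℝ) • (v - u) := by
      rw [Nonneg.coe_smul, ← add_zero (a • (v - u)), ← hy0, ← hxy]
      abel
    rw [segment_eq_image']
    exact ⟨a, ⟨a.2, le_one_of_add_smul_sub_mem hu hv huv (hx ▸ hxP)⟩, hx.symm⟩

theorem sub_mem_hull_sub_extremePoints {V : Finset E} {P : Set E}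
    (hP : P = convexHull ℝ (V : Set E)) (u : E) {x : E} (hx : x ∈ P) :
    x - u ∈ PointedCone.hull ℝ ((· - u) '' P.extremePoints ℝ) := by
  have hfin : (P.extremePoints ℝ).Finite :=
    V.finite_toSet.subset (hP ▸ extremePoints_convexHull_subset)
  have hPcomp : IsCompact P := hP ▸ V.finite_toSet.isCompact_convexHull ℝ
  rw [← closure_convexHull_extremePoints hPcomp (hP ▸ convex_convexHull ℝ _),
    (hfin.isClosed_convexHull ℝ).closure_eq] at hx
  rw [sub_eq_neg_add]
  refine convexHull_min (fun v hv => ?_)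
    ((PointedCone.hull ℝ _).convex.translate_preimage_right (-u)) hx
  rw [Set.mem_preimage, ← sub_eq_neg_add]
  exact PointedCone.subset_hull (mem_image_of_mem _ hv)

theorem sub_mem_hull_edge_directions {V : Finset E} {P : Set E}
    (hP : P = convexHull ℝ (V : Set E)) {u : E} (hu : u ∈ P.extremePoints ℝ) {x : E}
    (hx : x ∈ P) :
    x - u ∈ PointedCone.hull ℝ
      ((· - u) '' {w ∈ P.extremePoints ℝ | IsExposed ℝ P (segment ℝ u w)}) := by
  classical
  have hPconv : Convex ℝ P := hP ▸ convex_convexHull ℝ _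
  set W : Finset E := (V.filter (· ∈ P.extremePoints ℝ)).erase u
  have hW : ∀ w ∈ W, w ∈ P.extremePoints ℝ ∧ w ≠ u := fun w hw => by
    simp only [W, Finset.mem_erase, Finset.mem_filter] at hw
    exact ⟨hw.2.2, hw.1⟩
  obtain ⟨G, hGW, hGhull, hGirr⟩ :=
    PointedCone.exists_subset_hull_eq_forall_notMem_hull_erase (R := ℝ) (W.image (· - u))
  have hbase : ∀ y ∈ P, y - u ∈ PointedCone.hull ℝ (G : Set E) := fun y hy => by
    refine hGhull ▸ Submodule.span_le.2 ?_ (sub_mem_hull_sub_extremePoints hP u hy)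
    rintro _ ⟨v, hv, rfl⟩
    obtain rfl | hvu := eq_or_ne v u
    · simp
    · refine PointedCone.subset_hull (Finset.mem_coe.2 (Finset.mem_image_of_mem _ ?_))
      simp only [W, Finset.mem_erase, Finset.mem_filter]
      exact ⟨hvu, (hP ▸ extremePoints_convexHull_subset) (hP ▸ hv), hv⟩
  have hG : ∀ g ∈ G, ∃ v ∈ W, v - u = g := fun g hg => Finset.mem_image.1 (hGW hg)
  have hpointed : (0 : E) ∉ convexHull ℝ (G : Set E) := by
    refine zero_notMem_convexHull_of_mem_extremePoints hPconv hu fun g hg => ?_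
    obtain ⟨v, hv, rfl⟩ := hG g hg
    exact ⟨sub_ne_zero.2 (hW v hv).2, by simpa using (hW v hv).1.1⟩
  refine Submodule.span_mono ?_ (hbase x hx)
  intro g hg
  obtain ⟨v, hvW, rfl⟩ := hG g hg
  obtain ⟨F, hFg, hFG⟩ := exists_clm_eq_zero_and_neg_of_notMem_hull hpointed hg (hGirr _ hg)
  refine ⟨v, ⟨(hW v hvW).1, isExposed_segment_of_map_eq_zero_of_map_neg hPconv hu.1 (hW v hvW).1
    (hW v hvW).2.symm (fun y hy => ?_) hFg hFG⟩, rfl⟩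
  rw [← Finset.coe_insert, Finset.insert_erase hg]
  exact hbase y hy

theorem IsExtreme.exists_mem_extremePoints_forall_le {P F : Set E} (hPF : IsExtreme ℝ P F)
    (hF : IsCompact F) (hFne : F.Nonempty) (f : E →L[ℝ] ℝ) :
    ∃ u ∈ P.extremePoints ℝ ∩ F, ∀ y ∈ F, f y ≤ f u := by
  have hM : IsExposed ℝ F (f.toExposed F) := ContinuousLinearMap.toExposed.isExposed
  obtain ⟨x, hxF, hxmax⟩ := hF.exists_isMaxOn hFne f.continuous.continuousOn
  obtain ⟨u, hu⟩ := (hM.isCompact hF).extremePoints_nonempty ⟨x, hxF, hxmax⟩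
  exact ⟨u, ⟨(hPF.trans hM.isExtreme).extremePoints_subset_extremePoints hu, hu.1.1⟩, hu.1.2⟩

theorem subset_add_of_edge_directions_mem {V : Finset E} {P : Set E}
    (hP : P = convexHull ℝ (V : Set E)) {F : Set E} (hPF : IsExtreme ℝ P F) (hFc : IsCompact F)
    (hFconv : Convex ℝ F) (hFne : F.Nonempty) (K : PointedCone ℝ E) (hK : IsClosed (K : Set E))
    (hedge : ∀ u ∈ P.extremePoints ℝ ∩ F, ∀ w ∈ P.extremePoints ℝ, w ∉ F →
      IsExposed ℝ P (segment ℝ u w) → w - u ∈ K) :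
    P ⊆ F + K := by
  intro x hx
  by_contra hxS
  obtain ⟨f, r, hfS, hrx⟩ :=
    geometric_hahn_banach_closed_point (hFconv.add K.convex) (hK.add_left_of_isCompact hFc) hxS
  have hF_lt : ∀ p ∈ F, f p < r := fun p hp => hfS p (by simpa using add_mem_add hp K.zero_mem)
  have hfK : ∀ k ∈ K, f k ≤ 0 := by
    intro k hk
    by_contra! hpos
    obtain ⟨p, hp⟩ := hFne
    have ht : 0 ≤ (r - f p) / f k := div_nonneg (sub_nonneg.2 (hF_lt p hp).le) hpos.le
    have := hfS _ (add_mem_add hp (K.smul_mem ht hk))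
    rw [map_add, map_smul, smul_eq_mul, div_mul_cancel₀ _ hpos.ne'] at this
    linarith
  obtain ⟨u, ⟨huP, huF⟩, hmax⟩ := hPF.exists_mem_extremePoints_forall_le hFc hFne f
  have hxu : f (x - u) ≤ 0 := by
    refine PointedCone.map_nonpos_of_mem_hull (f := (f : E →ₗ[ℝ] ℝ)) ?_
      (sub_mem_hull_edge_directions hP huP hx)
    rintro _ ⟨w, ⟨hw, hexp⟩, rfl⟩
    by_cases hwF : w ∈ F
    · simpa [sub_nonpos] using hmax w hwF
    · exact hfK _ (hedge u ⟨huP, huF⟩ w hw hwF hexp)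
  rw [map_sub] at hxu
  linarith [hF_lt u huF]

end Polytope

section DescentCone

variable {E : Type*} [AddCommGroup E] [Module ℝ E]

def descentCone (N : Seminorm ℝ E) (ℓ : E →ₗ[ℝ] ℝ) {Δ : ℝ} (hΔ : 0 ≤ Δ) : PointedCone ℝ E where
  carrier := {y | Δ * N y + ℓ y ≤ 0}
  add_mem' {x y} hx hy := by
    simp only [Set.mem_ofPred_eq, map_add] at hx hy ⊢
    nlinarith [map_add_le_add N x y]
  zero_mem' := by simp
  smul_mem' a y hy := by
    simp only [Set.mem_ofPred_eq, ← Nonneg.coe_smul, map_smul, map_smul_eq_mul,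
      smul_eq_mul] at hy ⊢
    rw [Real.norm_of_nonneg a.2]
    nlinarith [a.2]

variable {N : Seminorm ℝ E} {ℓ : E →ₗ[ℝ] ℝ} {Δ : ℝ} (hΔ : 0 ≤ Δ)

theorem mem_descentCone {y : E} : y ∈ descentCone N ℓ hΔ ↔ Δ * N y + ℓ y ≤ 0 := Iff.rfl

theorem sub_mem_descentCone_of_le_div {u w : E} (hwu : ℓ w ≤ ℓ u)
    (hslope : N (u - w) ≠ 0 → Δ ≤ (ℓ u - ℓ w) / N (u - w)) : w - u ∈ descentCone N ℓ hΔ := by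
  rw [mem_descentCone, ℓ.map_sub, map_sub_rev N]
  by_cases hN : N (u - w) = 0
  · rw [hN, mul_zero]
    linarith
  · have := hslope hN
    rw [le_div_iff₀ ((apply_nonneg N _).lt_of_ne' hN)] at this
    linarith

theorem mul_sInf_le_sub_of_mem_descentCone {F : Set E} {p k : E} (hp : p ∈ F)
    (hk : k ∈ descentCone N ℓ hΔ) :
    Δ * sInf ((fun ν => N (ν - (p + k))) '' F) ≤ ℓ p - ℓ (p + k) := by
  have hinf : sInf ((fun ν => N (ν - (p + k))) '' F) ≤ N k :=
    csInf_le ⟨0, by rintro _ ⟨ν, -, rfl⟩; exact apply_nonneg N _⟩ ⟨p, hp, by simp⟩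
  rw [mem_descentCone] at hk
  rw [map_add]
  nlinarith [mul_le_mul_of_nonneg_left hinf hΔ]

end DescentCone

theorem isClosed_descentCone {E : Type*} [NormedAddCommGroup E] [NormedSpace ℝ E]
    [FiniteDimensional ℝ E] (N : Seminorm ℝ E) (ℓ : E →L[ℝ] ℝ)
    {Δ : ℝ} (hΔ : 0 ≤ Δ) : IsClosed (descentCone N (ℓ : E →ₗ[ℝ] ℝ) hΔ : Set E) :=
  isClosed_le ((continuous_const.mul N.convexOn.locallyLipschitz.continuous).add ℓ.continuous)
    continuous_const

def linValCLM {X : Type*} [Fintype X] (c : X → ℝ) : (X → ℝ) →L[ℝ] ℝ :=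
  ∑ x, c x • ContinuousLinearMap.proj x

theorem linValCLM_apply {X : Type*} [Fintype X] (c μ : X → ℝ) :
    linValCLM c μ = linVal c μ := by
  simp [linValCLM, linVal]

theorem stmt3_general {X : Type*} [Fintype X]
    -- `P` is a polytope, i.e. the convex hull of a finite set
    (V : Finset (X → ℝ)) (P : Set (X → ℝ)) (hP : P = convexHull ℝ (V : Set (X → ℝ)))
    (c : X → ℝ)
    -- `Fstar` is the face of maximizers of `μ ↦ cᵀμ` over `P`
    (Fstar : Set (X → ℝ))
    (hF : Fstar = {μ | μ ∈ P ∧ ∀ ν ∈ P, linVal c ν ≤ linVal c μ})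
    -- an arbitrary semi-norm
    (N : Seminorm ℝ (X → ℝ))
    -- `Δ` is the minimum of the slopes along edges leaving `Fstar`;
    -- by the convention `c/0 := +∞`, pairs with `N (μs - μ) = 0` are discarded
    (Δ : ℝ)
    (hΔ : IsLeast {r : ℝ | ∃ μs ∈ Set.extremePoints ℝ P ∩ Fstar,
        ∃ μ ∈ Set.extremePoints ℝ P, μ ∉ Fstar ∧
          IsExposed ℝ P (segment ℝ μs μ) ∧ N (μs - μ) ≠ 0 ∧
          r = (linVal c μs - linVal c μ) / N (μs - μ)} Δ) :
    0 < Δ ∧ ∀ μ ∈ P, ∀ μstar ∈ Fstar,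
      linVal c μstar - linVal c μ ≥ Δ * sInf ((fun ν => N (ν - μ)) '' Fstar) := by
  simp only [← linValCLM_apply] at hF hΔ ⊢
  set ℓ := linValCLM c
  obtain ⟨⟨μs, ⟨-, hμsF⟩, μ₀, hμ₀, hμ₀F, -, hN₀, hΔeq⟩, hΔle⟩ := hΔ
  have hmax : ∀ μ ∈ Fstar, ∀ ν ∈ P, ℓ ν ≤ ℓ μ := fun μ hμ => (hF ▸ hμ).2
  have hΔpos : 0 < Δ := by
    obtain ⟨ν, hν, hlt⟩ : ∃ ν ∈ P, ℓ μ₀ < ℓ ν := by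
      by_contra! h
      exact hμ₀F (hF ▸ ⟨hμ₀.1, h⟩)
    rw [hΔeq]
    exact div_pos (sub_pos.2 (hlt.trans_le (hmax μs hμsF ν hν)))
      ((apply_nonneg N _).lt_of_ne' hN₀)
  have hFexp : IsExposed ℝ P Fstar := fun _ => ⟨ℓ, hF⟩
  have hdec : P ⊆ Fstar + descentCone N (ℓ : (X → ℝ) →ₗ[ℝ] ℝ) hΔpos.le :=
    subset_add_of_edge_directions_mem hP hFexp.isExtreme
      (hFexp.isCompact (hP ▸ V.finite_toSet.isCompact_convexHull ℝ))
      (hFexp.convex (hP ▸ convex_convexHull ℝ _)) ⟨μs, hμsF⟩ _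
      (isClosed_descentCone N ℓ hΔpos.le) fun u hu w hw hwF hexp =>
        sub_mem_descentCone_of_le_div hΔpos.le (hmax u hu.2 w hw.1)
          fun hN => hΔle ⟨u, hu, w, hw, hwF, hexp, hN, rfl⟩
  refine ⟨hΔpos, fun μ hμ μstar hμstar => ?_⟩
  obtain ⟨p, hp, k, hk, rfl⟩ := Set.mem_add.1 (hdec hμ)
  have hval : ℓ μstar = ℓ p :=
    le_antisymm (hmax p hp μstar (hF ▸ hμstar).1) (hmax μstar hμstar p (hF ▸ hp).1)
  rw [ge_iff_le, hval]
  exact mul_sInf_le_sub_of_mem_descentCone hΔpos.le hp hk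

theorem stmt3 {X : Type*} [Fintype X]
    -- `P` is a polytope, i.e. the convex hull of a finite set
    (V : Finset (X → ℝ)) (P : Set (X → ℝ)) (hP : P = convexHull ℝ (V : Set (X → ℝ)))
    (c : X → ℝ)
    -- `Fstar` is the face of maximizers of `μ ↦ cᵀμ` over `P`
    (Fstar : Set (X → ℝ))
    (hF : Fstar = {μ | μ ∈ P ∧ ∀ ν ∈ P, linVal c ν ≤ linVal c μ})
    (hFP : Fstar ≠ P)
    -- an arbitrary semi-norm
    (N : Seminorm ℝ (X → ℝ))
    -- `Δ` is the minimum of the slopes along edges leaving `Fstar`;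
    -- by the convention `c/0 := +∞`, pairs with `N (μs - μ) = 0` are discarded
    (Δ : ℝ)
    (hΔ : IsLeast {r : ℝ | ∃ μs ∈ Set.extremePoints ℝ P ∩ Fstar,
        ∃ μ ∈ Set.extremePoints ℝ P, μ ∉ Fstar ∧
          IsExposed ℝ P (segment ℝ μs μ) ∧ N (μs - μ) ≠ 0 ∧
          r = (linVal c μs - linVal c μ) / N (μs - μ)} Δ) :
    0 < Δ ∧ ∀ μ ∈ P, ∀ μstar ∈ Fstar,
      linVal c μstar - linVal c μ ≥ Δ * sInf ((fun ν => N (ν - μ)) '' Fstar) :=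
  stmt3_general V P hP c Fstar hF N Δ hΔ
end

section
/- Let P = Δ_X ∩ L for an affine subspace L ⊆ ℝ^X, let F be a face of P, μ ∈ relint(P), and let μ̂ ∈ F minimize D_KL(·, μ) over F (the information projection of μ to F). Then μ̂ lies in the relative interior of F; in particular μ̂ has maximal support among elements of F. -/
open Finset

/-!
If `μhat x = 0 < p x` for some `p ∈ F`, then along the segment from `μhat` to `p` the
`x`-term of `klDiv · μ` contributes `t * p x * log t`, whose slope at `t = 0⁺` is `-∞`, while
convexity bounds all other terms by a linear function of `t`; so the information projection has
maximal support in `F`. Every exposed face of `Δ_X ∩ L` is cut out of its affine span by the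
constraints `0 ≤ v x` alone. A point of maximal support vanishes only where all of `F`, hence
its affine span, vanishes, and satisfies the other constraints strictly; so a neighbourhood of it
in the affine span of `F` lies in `F`.
-/

open Real Set Filter Topology

theorem AffineMap.apply_eq_of_mem_affineSpan {k V₁ P₁ V₂ P₂ : Type*} [Ring k]
    [AddCommGroup V₁] [Module k V₁] [AddTorsor V₁ P₁] [AddCommGroup V₂] [Module k V₂]
    [AddTorsor V₂ P₂] (f : P₁ →ᵃ[k] P₂) {s : Set P₁} {c : P₂} (hs : ∀ p ∈ s, f p = c)
    {v : P₁} (hv : v ∈ affineSpan k s) : f v = c := by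
  have hfv : f v ∈ affineSpan k (f '' s) := AffineSubspace.map_span f s ▸ ⟨v, hv, rfl⟩
  rw [← AffineSubspace.mem_affineSpan_singleton (k := k)]
  exact affineSpan_mono k (s₂ := {c}) (Set.image_subset_iff.2 hs) hfv

theorem IsExposed.affineSpan_inter_subset {E : Type*} [AddCommGroup E] [Module ℝ E]
    [TopologicalSpace E] {P F S : Set E} (hF : IsExposed ℝ P F)
    (hP : (affineSpan ℝ P : Set E) ∩ S ⊆ P) : (affineSpan ℝ F : Set E) ∩ S ⊆ F := by
  rintro v ⟨hv, hvS⟩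
  obtain ⟨q, hq⟩ := (affineSpan_nonempty (k := ℝ)).1 ⟨v, hv⟩
  obtain ⟨l, rfl⟩ := hF ⟨q, hq⟩
  have hlF : ∀ p ∈ {x ∈ P | ∀ y ∈ P, l y ≤ l x}, l.toLinearMap.toAffineMap p = l q :=
    fun p hp => le_antisymm (hq.2 p hp.1) (hp.2 q hq.1)
  have hlv : l v = l q := l.toLinearMap.toAffineMap.apply_eq_of_mem_affineSpan hlF hv
  refine ⟨hP ⟨affineSpan_mono ℝ (fun p hp => hp.1) hv, hvS⟩, fun y hy => ?_⟩
  exact hlv ▸ hq.2 y hy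

theorem affineSpan_inter_nonneg_subset_simplex_inter {X : Type*} [Fintype X]
    (L : AffineSubspace ℝ (X → ℝ)) :
    (affineSpan ℝ {p | (∀ x, 0 ≤ p x) ∧ ∑ x, p x = 1 ∧ p ∈ L} : Set (X → ℝ)) ∩
      {v | ∀ x, 0 ≤ v x} ⊆ {p | (∀ x, 0 ≤ p x) ∧ ∑ x, p x = 1 ∧ p ∈ L} := by
  rintro v ⟨hv, hnn⟩
  have hsum := (∑ x, LinearMap.proj (R := ℝ) (φ := fun _ : X => ℝ) x).toAffineMap
    |>.apply_eq_of_mem_affineSpan (c := 1) (fun p hp => by simpa using hp.2.1) hv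
  simp only [LinearMap.coe_toAffineMap, LinearMap.sum_apply,
    LinearMap.coe_proj, Function.eval] at hsum
  exact ⟨hnn, hsum, affineSpan_le.2 (fun p hp => hp.2.2) hv⟩

section

variable {X : Type*} {K : Set (X → ℝ)}
  (hKnn : ∀ p ∈ K, ∀ x, 0 ≤ p x) (hK : (affineSpan ℝ K : Set (X → ℝ)) ∩ {v | ∀ x, 0 ≤ v x} ⊆ K)
include hKnn hK

theorem convex_of_affineSpan_inter_nonneg_subset : Convex ℝ K := by
  intro p hp q hq a b ha hb hab
  refine hK ⟨(affineSpan ℝ K).convex (subset_affineSpan ℝ K hp) (subset_affineSpan ℝ K hq)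
    ha hb hab, fun x => ?_⟩
  simpa using add_nonneg (mul_nonneg ha (hKnn p hp x)) (mul_nonneg hb (hKnn q hq x))

theorem mem_intrinsicInterior_of_support_maximal [Finite X] {q : X → ℝ} (hq : q ∈ K)
    (hmax : ∀ p ∈ K, ∀ x, 0 < p x → 0 < q x) : q ∈ intrinsicInterior ℝ K := by
  set U : Set (X → ℝ) := ⋂ x ∈ {x | 0 < q x}, {v | 0 < v x}
  have hU : IsOpen U :=
    (Set.toFinite _).isOpen_biInter fun x _ => isOpen_lt continuous_const (continuous_apply x)
  have hqU : q ∈ U := mem_iInter₂.2 fun x hx => hx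
  have hUK : ∀ v ∈ affineSpan ℝ K, v ∈ U → v ∈ K := by
    intro v hv hvU
    refine hK ⟨hv, fun x => ?_⟩
    rcases (hKnn q hq x).lt_or_eq with hqx | hqx
    · exact (mem_iInter₂.1 hvU x hqx).le
    · have hKx : ∀ p ∈ K, AffineMap.proj (k := ℝ) x p = 0 := fun p hp =>
        ((hKnn p hp x).eq_or_lt.resolve_right fun hpx => (hmax p hp x hpx).ne hqx).symm
      exact ((AffineMap.proj x).apply_eq_of_mem_affineSpan hKx hv).ge
  rw [mem_intrinsicInterior]
  refine ⟨⟨q, subset_affineSpan ℝ K hq⟩, mem_interior_iff_mem_nhds.2 ?_, rfl⟩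
  exact mem_of_superset ((hU.preimage continuous_subtype_val).mem_nhds hqU)
    fun v hv => hUK v v.2 hv

end

theorem Real.convexOn_mul_log_div {c : ℝ} (hc : 0 < c) :
    ConvexOn ℝ (Ici 0) fun u => u * log (u / c) := by
  refine (convexOn_mul_log.add ((LinearMap.mul ℝ ℝ (-log c)).convexOn (convex_Ici 0))).congr
    fun u hu => ?_
  rcases (mem_Ici.1 hu).eq_or_lt with rfl | hu₀
  · simp
  · simp only [map_neg, LinearMap.coe_neg, Pi.add_apply, Pi.neg_apply, LinearMap.mul_apply_apply,
      log_div hu₀.ne' hc.ne']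
    ring

section

variable {X : Type*} [Fintype X] {μ : X → ℝ}

theorem klDiv_convexCombination_le {q p : X → ℝ} (hq : ∀ x, 0 ≤ q x) (hp : ∀ x, 0 ≤ p x)
    (hμ : ∀ x, 0 < μ x) {x₀ : X} (hqx₀ : q x₀ = 0) {t : ℝ} (ht₀ : 0 < t) (ht₁ : t ≤ 1) :
    klDiv ((1 - t) • q + t • p) μ ≤
      (1 - t) * klDiv q μ + t * klDiv p μ + t * p x₀ * log t := by
  classical
  unfold klDiv
  calc
    _ ≤ ∑ x, ((1 - t) * (q x * log (q x / μ x)) + t * (p x * log (p x / μ x)) +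
          (Pi.single x₀ (t * p x₀ * log t) : X → ℝ) x) := by
      refine sum_le_sum fun x _ => ?_
      simp only [Pi.add_apply, Pi.smul_apply, smul_eq_mul]
      by_cases hx : x = x₀
      · subst hx
        refine le_of_eq ?_
        rcases (hp x).eq_or_lt with hpx | hpx
        · simp [hqx₀, ← hpx]
        · simp only [hqx₀, Pi.single_eq_same, mul_zero, zero_add, mul_div_assoc,
            log_mul ht₀.ne' (div_pos hpx (hμ x)).ne']
          ring
      · rw [Pi.single_eq_of_ne hx, add_zero]
        exact (convexOn_mul_log_div (hμ x)).2 (hq x) (hp x) (by linarith) ht₀.le (by ring)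
    _ = _ := by
      simp [sum_add_distrib, mul_sum]

theorem pos_of_isMinOn_klDiv {C : Set (X → ℝ)} (hC : Convex ℝ C) (hCnn : ∀ p ∈ C, ∀ x, 0 ≤ p x)
    (hμ : ∀ x, 0 < μ x) {q : X → ℝ} (hq : q ∈ C) (hmin : IsMinOn (fun p => klDiv p μ) C q)
    {p : X → ℝ} (hp : p ∈ C) {x₀ : X} (hpx₀ : 0 < p x₀) : 0 < q x₀ := by
  by_contra hqx₀
  replace hqx₀ : q x₀ = 0 := le_antisymm (not_lt.1 hqx₀) (hCnn q hq x₀)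
  have hlog : ∀ t ∈ Ioc (0 : ℝ) 1, klDiv q μ - klDiv p μ ≤ p x₀ * log t := by
    rintro t ⟨ht₀, ht₁⟩
    have hmin_t : klDiv q μ ≤ klDiv ((1 - t) • q + t • p) μ :=
      hmin (hC hq hp (by linarith) ht₀.le (by ring))
    have hle := hmin_t.trans
      (klDiv_convexCombination_le (hCnn q hq) (hCnn p hp) hμ hqx₀ ht₀ ht₁)
    exact le_of_mul_le_mul_left (by linarith) ht₀
  have hbot : Tendsto (fun t => p x₀ * log t) (𝓝[>] 0) atBot :=
    tendsto_log_nhdsGT_zero.const_mul_atBot hpx₀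
  obtain ⟨t, hlt, ht⟩ :=
    ((hbot.eventually_lt_atBot (klDiv q μ - klDiv p μ)).and (Ioc_mem_nhdsGT one_pos)).exists
  exact (hlog t ht).not_gt hlt

end

theorem stmt5_general {X : Type*} [Fintype X]
    (L : AffineSubspace ℝ (X → ℝ)) (P : Set (X → ℝ))
    (hP : P = {p | (∀ x, 0 ≤ p x) ∧ ∑ x, p x = 1 ∧ p ∈ L})
    -- `F` is a face of `P`
    (F : Set (X → ℝ)) (hFface : IsExposed ℝ P F)
    -- `μ` lies in the relative interior of `P` and is strictly positive
    (μ : X → ℝ) (hμpos : ∀ x, 0 < μ x)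
    -- `μhat` is the information projection of `μ` to `F`
    (μhat : X → ℝ) (hmem : μhat ∈ F)
    (hmin : ∀ p ∈ F, klDiv μhat μ ≤ klDiv p μ) :
    μhat ∈ intrinsicInterior ℝ F ∧ ∀ p ∈ F, ∀ x, 0 < p x → 0 < μhat x := by
  subst hP
  have hFnn : ∀ p ∈ F, ∀ x, 0 ≤ p x := fun p hp => (hFface.subset hp).1
  have hFspan := hFface.affineSpan_inter_subset (affineSpan_inter_nonneg_subset_simplex_inter L)
  have hsupp : ∀ p ∈ F, ∀ x, 0 < p x → 0 < μhat x := fun p hp x hpx =>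
    pos_of_isMinOn_klDiv (convex_of_affineSpan_inter_nonneg_subset hFnn hFspan) hFnn hμpos hmem
      hmin hp hpx
  exact ⟨mem_intrinsicInterior_of_support_maximal hFnn hFspan hmem hsupp, hsupp⟩

theorem stmt5 {X : Type*} [Fintype X]
    (L : AffineSubspace ℝ (X → ℝ)) (P : Set (X → ℝ))
    (hP : P = {p | (∀ x, 0 ≤ p x) ∧ ∑ x, p x = 1 ∧ p ∈ L})
    -- `F` is a face of `P`
    (F : Set (X → ℝ)) (hFface : IsExposed ℝ P F) (hFne : F.Nonempty)
    -- `μ` lies in the relative interior of `P` and is strictly positive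
    (μ : X → ℝ) (hμ : μ ∈ intrinsicInterior ℝ P) (hμpos : ∀ x, 0 < μ x)
    -- `μhat` is the information projection of `μ` to `F`
    (μhat : X → ℝ) (hmem : μhat ∈ F)
    (hmin : ∀ p ∈ F, klDiv μhat μ ≤ klDiv p μ) :
    μhat ∈ intrinsicInterior ℝ F ∧ ∀ p ∈ F, ∀ x, 0 < p x → 0 < μhat x :=
  stmt5_general L P hP F hFface μ hμpos μhat hmem hmin
end

section
/- Let (μ_t) be the Fisher-Rao gradient flow of the linear potential f(μ) = cᵀμ over P = ℝ^X_{≥0} ∩ L with μ_0 ∈ P ∩ ℝ^X_{>0}. Then for every t > 0, μ_t is the unique maximizer of μ ↦ cᵀμ - t⁻¹ D_KL(μ, μ_0) over P (central path property). -/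
open Finset

noncomputable def klGen {X : Type*} [Fintype X] (μ ν : X → ℝ) : ℝ :=
  ∑ x, (μ x * Real.log (μ x / ν x) - μ x + ν x)

/-!
Along the flow, `d/dt ⟨v, log μ_t⟩ = ⟨c, v⟩` for every direction `v` of `L`, so
`log μ_t - log μ_0` is `t c` up to the orthogonal complement of `L.direction`: this is the
first-order optimality condition of `cᵀμ - t⁻¹ D_KL(μ, μ_0)` on `L`. The three-point identity
`D(p, μ_0) = D(p, μ_t) + D(μ_t, μ_0) + ⟨p - μ_t, log μ_t - log μ_0⟩` then shows that the
objective at any other `p ∈ P` falls short of its value at `μ_t` by `t⁻¹ D(p, μ_t) > 0`.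
-/

open Real InformationTheory

lemma mul_log_div_eq_mul_sub_log (a : ℝ) {b : ℝ} (hb : b ≠ 0) :
    a * log (a / b) = a * (log a - log b) := by
  rcases eq_or_ne a 0 with rfl | ha
  · simp
  · rw [log_div ha hb]

lemma sub_eq_mul_of_hasDerivAt_const {f : ℝ → ℝ} {k t : ℝ} (ht : 0 ≤ t)
    (hf : ∀ s ∈ Set.Icc 0 t, HasDerivAt f k s) : f t - f 0 = t * k := by
  have hf' : ∀ s ∈ Set.uIcc 0 t, HasDerivAt f k s := by rwa [Set.uIcc_of_le ht]
  rw [← intervalIntegral.integral_eq_sub_of_hasDerivAt hf' intervalIntegrable_const,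
    intervalIntegral.integral_const, sub_zero, smul_eq_mul]

section Divergence

variable {X : Type*} [Fintype X]

lemma linVal_sub (c p q : X → ℝ) : linVal c (p - q) = linVal c p - linVal c q := by
  simp only [linVal, Pi.sub_apply, mul_sub, sum_sub_distrib]

lemma klGen_eq_sum_mul_klFun (p ν : X → ℝ) (hν : ∀ x, ν x ≠ 0) :
    klGen p ν = ∑ x, ν x * klFun (p x / ν x) := by
  refine sum_congr rfl fun x _ => ?_
  rw [klFun_apply]
  field_simp [hν x]
  ring

lemma klGen_pos {p ν : X → ℝ} (hp : ∀ x, 0 ≤ p x) (hν : ∀ x, 0 < ν x) (hne : p ≠ ν) :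
    0 < klGen p ν := by
  obtain ⟨x₀, hx₀⟩ : ∃ x, p x ≠ ν x := Function.ne_iff.mp hne
  have hratio : ∀ x, 0 ≤ p x / ν x := fun x => div_nonneg (hp x) (hν x).le
  rw [klGen_eq_sum_mul_klFun p ν fun x => (hν x).ne']
  refine sum_pos' (fun x _ => mul_nonneg (hν x).le (klFun_nonneg (hratio x)))
    ⟨x₀, mem_univ _, mul_pos (hν x₀) ?_⟩
  refine (klFun_nonneg (hratio x₀)).lt_of_ne' fun h => hx₀ ?_
  rwa [klFun_eq_zero_iff (hratio x₀), div_eq_one_iff_eq (hν x₀).ne'] at h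

lemma klGen_three_point (p ν ρ : X → ℝ) (hν : ∀ x, ν x ≠ 0) (hρ : ∀ x, ρ x ≠ 0) :
    klGen p ρ = klGen p ν + klGen ν ρ + ∑ x, (p - ν) x * (log (ν x) - log (ρ x)) := by
  simp only [klGen, ← sum_add_distrib]
  refine sum_congr rfl fun x _ => ?_
  rw [mul_log_div_eq_mul_sub_log _ (hρ x), mul_log_div_eq_mul_sub_log _ (hν x),
    mul_log_div_eq_mul_sub_log _ (hρ x), Pi.sub_apply]
  ring

theorem linVal_sub_inv_mul_klGen_lt {c ν ρ : X → ℝ} {L : AffineSubspace ℝ (X → ℝ)} {t : ℝ}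
    (hν : ∀ x, 0 < ν x) (hρ : ∀ x, 0 < ρ x) (ht : 0 < t) (hνL : ν ∈ L)
    (hopt : ∀ v ∈ L.direction, ∑ x, v x * (log (ν x) - log (ρ x)) = t * linVal c v)
    {p : X → ℝ} (hp : ∀ x, 0 ≤ p x) (hpL : p ∈ L) (hne : p ≠ ν) :
    linVal c p - t⁻¹ * klGen p ρ < linVal c ν - t⁻¹ * klGen ν ρ := by
  have hsplit : klGen p ρ = klGen p ν + klGen ν ρ + t * (linVal c p - linVal c ν) := by
    rw [klGen_three_point p ν ρ (fun x => (hν x).ne') (fun x => (hρ x).ne'),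
      hopt (p - ν) (AffineSubspace.vsub_mem_direction hpL hνL), linVal_sub]
  have hgap : 0 < t⁻¹ * klGen p ν := mul_pos (inv_pos.mpr ht) (klGen_pos hp hν hne)
  rw [hsplit, mul_add, mul_add, inv_mul_cancel_left₀ ht.ne']
  linarith

end Divergence

lemma sum_mul_log_sub_log_zero {X : Type*} [Fintype X] {μ μ' : ℝ → X → ℝ} {v : X → ℝ} {k : ℝ}
    (hne : ∀ s ≥ (0:ℝ), ∀ x, μ s x ≠ 0)
    (hder : ∀ s ≥ (0:ℝ), ∀ x, HasDerivAt (fun r => μ r x) (μ' s x) s)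
    (hflow : ∀ s ≥ (0:ℝ), ∑ x, μ' s x * v x / μ s x = k) {t : ℝ} (ht : 0 ≤ t) :
    ∑ x, v x * (log (μ t x) - log (μ 0 x)) = t * k := by
  have hderiv : ∀ s ∈ Set.Icc 0 t, HasDerivAt (fun r => ∑ x, v x * log (μ r x)) k s := by
    rintro s ⟨hs, -⟩
    have hsum := HasDerivAt.fun_sum fun x (_ : x ∈ univ) =>
      ((hder s hs x).log (hne s hs x)).const_mul (v x)
    refine hsum.congr_deriv ?_
    rw [← hflow s hs]
    exact sum_congr rfl fun x _ => by ring
  rw [← sub_eq_mul_of_hasDerivAt_const ht hderiv, ← sum_sub_distrib]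
  exact sum_congr rfl fun x _ => mul_sub _ _ _

theorem stmt8_general {X : Type*} [Fintype X]
    (c : X → ℝ) (L : AffineSubspace ℝ (X → ℝ))
    (P : Set (X → ℝ)) (hP : P = {p | (∀ x, 0 ≤ p x) ∧ p ∈ L})
    -- the Fisher-Rao gradient flow `(μ_t)_{t≥0} ⊆ int P` of `f(μ) = cᵀμ`
    (μ μ' : ℝ → X → ℝ) (μ0 : X → ℝ)
    (hinit : μ 0 = μ0)
    (hpos : ∀ t ≥ (0:ℝ), ∀ x, 0 < μ t x)
    (hmem : ∀ t ≥ (0:ℝ), μ t ∈ L)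
    (hder : ∀ t ≥ (0:ℝ), ∀ x, HasDerivAt (fun s => μ s x) (μ' t x) t)
    -- ⟨∇²φ(μ_t) ∂_t μ_t, v⟩ = ⟨c, v⟩ for all tangent vectors v
    (hflow : ∀ t ≥ (0:ℝ), ∀ v ∈ L.direction,
      ∑ x, μ' t x * v x / μ t x = ∑ x, c x * v x) :
    -- central path property: `μ_t` is the unique maximizer of `cᵀμ - t⁻¹ D_KL(μ, μ_0)`
    ∀ t > (0:ℝ), μ t ∈ P ∧ ∀ p ∈ P, p ≠ μ t →
      linVal c p - t⁻¹ * klGen p μ0 < linVal c (μ t) - t⁻¹ * klGen (μ t) μ0 := by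
  subst hinit hP
  intro t ht
  refine ⟨⟨fun x => (hpos t ht.le x).le, hmem t ht.le⟩, fun p ⟨hp, hpL⟩ hne => ?_⟩
  refine linVal_sub_inv_mul_klGen_lt (hpos t ht.le) (hpos 0 le_rfl) ht (hmem t ht.le)
    (fun v hv => ?_) hp hpL hne
  exact sum_mul_log_sub_log_zero (fun s hs x => (hpos s hs x).ne') hder
    (fun s hs => hflow s hs v hv) ht.le

theorem stmt8 {X : Type*} [Fintype X]
    (c : X → ℝ) (L : AffineSubspace ℝ (X → ℝ))
    (P : Set (X → ℝ)) (hP : P = {p | (∀ x, 0 ≤ p x) ∧ p ∈ L})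
    -- the Fisher-Rao gradient flow `(μ_t)_{t≥0} ⊆ int P` of `f(μ) = cᵀμ`
    (μ μ' : ℝ → X → ℝ) (μ0 : X → ℝ)
    (hinit : μ 0 = μ0) (hμ0pos : ∀ x, 0 < μ0 x) (hμ0L : μ0 ∈ L)
    (hpos : ∀ t ≥ (0:ℝ), ∀ x, 0 < μ t x)
    (hmem : ∀ t ≥ (0:ℝ), μ t ∈ L)
    (hder : ∀ t ≥ (0:ℝ), ∀ x, HasDerivAt (fun s => μ s x) (μ' t x) t)
    -- ⟨∇²φ(μ_t) ∂_t μ_t, v⟩ = ⟨c, v⟩ for all tangent vectors v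
    (hflow : ∀ t ≥ (0:ℝ), ∀ v ∈ L.direction,
      ∑ x, μ' t x * v x / μ t x = ∑ x, c x * v x) :
    -- central path property: `μ_t` is the unique maximizer of `cᵀμ - t⁻¹ D_KL(μ, μ_0)`
    ∀ t > (0:ℝ), μ t ∈ P ∧ ∀ p ∈ P, p ≠ μ t →
      linVal c p - t⁻¹ * klGen p μ0 < linVal c (μ t) - t⁻¹ * klGen (μ t) μ0 :=
  stmt8_general c L P hP μ μ' μ0 hinit hpos hmem hder hflow
end

section
/- Let (μ_t)_{t≥0} be the Fisher-Rao gradient flow of cᵀμ over P = Δ_X ∩ L and let F* be the face of maximizers. Then μ_t converges as t → ∞ to the information projection of μ_0 to F*, i.e., lim_{t→∞} μ_t = argmin{D_KL(μ, μ_0) : μ ∈ F*}. -/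
open Finset Filter Topology

lemma strictConvexOn_mul_log_div {ν : ℝ} (hν : ν ≠ 0) :
    StrictConvexOn ℝ (Set.Ici 0) fun t => t * Real.log (t / ν) := by
  refine (Real.strictConvexOn_mul_log.add_convexOn
    ((LinearMap.mulLeft ℝ (-Real.log ν)).convexOn (convex_Ici 0))).congr fun t _ => ?_
  rcases eq_or_ne t 0 with rfl | ht
  · simp
  · simp only [Pi.add_apply, LinearMap.mulLeft_apply, Real.log_div ht hν]; ring

lemma StrictConvexOn.sum_apply {ι : Type*} [Fintype ι] {s : Set ℝ} {f : ι → ℝ → ℝ}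
    (hf : ∀ i, StrictConvexOn ℝ s (f i)) :
    StrictConvexOn ℝ (Set.univ.pi fun _ => s) fun p => ∑ i, f i (p i) := by
  refine ⟨convex_pi fun i _ => (hf i).1, fun p hp q hq hpq a b ha hb hab => ?_⟩
  obtain ⟨i, hi⟩ := Function.ne_iff.mp hpq
  simp only [smul_eq_mul, mul_sum, ← sum_add_distrib]
  refine sum_lt_sum (fun j _ => (hf j).convexOn.2 (hp j trivial) (hq j trivial) ha.le hb.le hab)
    ⟨i, mem_univ i, (hf i).2 (hp i trivial) (hq i trivial) hi ha hb hab⟩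

lemma strictConvexOn_klDiv_left {X : Type*} [Fintype X] {ν : X → ℝ} (hν : ∀ x, ν x ≠ 0) :
    StrictConvexOn ℝ (Set.univ.pi fun _ => Set.Ici 0) fun p => klDiv p ν :=
  StrictConvexOn.sum_apply fun x => strictConvexOn_mul_log_div (hν x)

lemma continuous_klDiv_left {X : Type*} [Fintype X] {ν : X → ℝ} (hν : ∀ x, ν x ≠ 0) :
    Continuous fun p => klDiv p ν := by
  have hscale : ∀ p : X → ℝ, klDiv p ν = ∑ x, ν x * (p x / ν x * Real.log (p x / ν x)) := fun p =>
    sum_congr rfl fun x _ => by field_simp [hν x]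
  simp only [hscale]
  fun_prop

lemma continuous_linVal {X : Type*} [Fintype X] (c : X → ℝ) : Continuous (linVal c) := by
  unfold linVal; fun_prop

lemma concaveOn_linVal {X : Type*} [Fintype X] (c : X → ℝ) {s : Set (X → ℝ)} (hs : Convex ℝ s) :
    ConcaveOn ℝ s (linVal c) :=
  (dotProductBilin ℝ ℝ c).concaveOn hs

lemma ConcaveOn.convex_setOf_isMaxOn {E : Type*} [AddCommGroup E] [Module ℝ E] {s : Set E}
    {f : E → ℝ} (hf : ConcaveOn ℝ s f) : Convex ℝ {p | p ∈ s ∧ ∀ q ∈ s, f q ≤ f p} := by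
  rintro p ⟨hp, hpmax⟩ p' ⟨hp', hp'max⟩ a b ha hb hab
  refine ⟨hf.1 hp hp' ha hb hab, fun q hq => ?_⟩
  calc f q = a • f q + b • f q := by rw [← add_smul, hab, one_smul]
    _ ≤ a • f p + b • f p' := by gcongr; exacts [hpmax q hq, hp'max q hq]
    _ ≤ f (a • p + b • p') := hf.2 hp hp' ha hb hab

section CentralPath

variable {α : Type*} {f g : α → ℝ} {P : Set α} {x : ℝ → α} {y : α}

def IsCentralPath (f g : α → ℝ) (P : Set α) (x : ℝ → α) : Prop :=
  ∀ t > 0, x t ∈ P ∧ ∀ p ∈ P, f p - t⁻¹ * g p ≤ f (x t) - t⁻¹ * g (x t)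

lemma IsCentralPath.penalty_le (hx : IsCentralPath f g P x) (hyP : y ∈ P)
    (hy : ∀ q ∈ P, f q ≤ f y) {t : ℝ} (ht : 0 < t) : g (x t) ≤ g y := by
  obtain ⟨hxtP, hxt⟩ := hx t ht
  have := hxt y hyP
  have := hy (x t) hxtP
  exact le_of_mul_le_mul_left (by linarith) (inv_pos.mpr ht)

lemma IsCentralPath.tendsto_value (hx : IsCentralPath f g P x) (hyP : y ∈ P)
    (hy : ∀ q ∈ P, f q ≤ f y) {m : ℝ} (hm : ∀ p ∈ P, m ≤ g p) :
    Tendsto (f ∘ x) atTop (𝓝 (f y)) := by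
  have hlower : Tendsto (fun t : ℝ => f y - t⁻¹ * (g y - m)) atTop (𝓝 (f y)) := by
    simpa using tendsto_const_nhds.sub (tendsto_inv_atTop_zero.mul_const (g y - m))
  refine tendsto_of_tendsto_of_tendsto_of_le_of_le' hlower tendsto_const_nhds ?_ ?_
  · filter_upwards [eventually_gt_atTop 0] with t ht
    obtain ⟨hxtP, hxt⟩ := hx t ht
    have := hxt y hyP
    have := mul_le_mul_of_nonneg_left (hm _ hxtP) (inv_pos.mpr ht).le
    simp only [Function.comp_apply]
    linarith
  · filter_upwards [eventually_gt_atTop 0] with t ht using hy _ (hx t ht).1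

lemma IsCentralPath.mapClusterPt [TopologicalSpace α] (hx : IsCentralPath f g P x) (hyP : y ∈ P)
    (hy : ∀ q ∈ P, f q ≤ f y) (hP : IsCompact P) (hf : Continuous f) (hg : Continuous g) {a : α}
    (ha : MapClusterPt a atTop x) : (∀ q ∈ P, f q ≤ f a) ∧ g a ≤ g y := by
  obtain ⟨m, hm⟩ := hP.bddBelow_image hg.continuousOn
  have hval := hx.tendsto_value hyP hy fun p hp => hm ⟨p, hp, rfl⟩
  have hfa : f a = f y :=
    eq_of_nhds_neBot ((ha.continuousAt_comp hf.continuousAt).clusterPt.mono hval)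
  refine ⟨fun q hq => hfa ▸ hy q hq, (isClosed_le hg continuous_const).mem_of_mapClusterPt ha ?_⟩
  filter_upwards [eventually_gt_atTop 0] with t ht using hx.penalty_le hyP hy ht

end CentralPath

theorem stmt13_general {X : Type*} [Fintype X]
    (c : X → ℝ) (L : AffineSubspace ℝ (X → ℝ))
    -- `P = Δ_X ∩ L`
    (P : Set (X → ℝ)) (hP : P = {p | (∀ x, 0 ≤ p x) ∧ ∑ x, p x = 1 ∧ p ∈ L})
    -- the Fisher-Rao gradient flow `(μ_t)_{t≥0}`, started at `μ_0 ∈ P ∩ ℝ^X_{>0}`,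
    -- encoded via the central path property
    (μ : ℝ → X → ℝ) (μ0 : X → ℝ)
    (hμ0pos : ∀ x, 0 < μ0 x)
    (hμP : ∀ t > (0:ℝ), μ t ∈ P)
    (hcp : ∀ t > (0:ℝ), ∀ p ∈ P,
      linVal c p - t⁻¹ * klDiv p μ0 ≤ linVal c (μ t) - t⁻¹ * klDiv (μ t) μ0)
    -- `F*` is the face of maximizers
    (Fstar : Set (X → ℝ))
    (hF : Fstar = {p | p ∈ P ∧ ∀ q ∈ P, linVal c q ≤ linVal c p})
    -- `μ̂` is the information projection of `μ_0` to `F*`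
    (μhat : X → ℝ) (hhatF : μhat ∈ Fstar)
    (hhatmin : ∀ p ∈ Fstar, klDiv μhat μ0 ≤ klDiv p μ0) :
    Tendsto μ atTop (nhds μhat) := by
  have hPsimplex : P = stdSimplex ℝ X ∩ L := by
    ext p; simp [hP, stdSimplex, and_assoc]
  have hPcompact : IsCompact P :=
    hPsimplex ▸ (isCompact_stdSimplex ℝ X).inter_right L.closed_of_finiteDimensional
  have hPconvex : Convex ℝ P := hPsimplex ▸ (convex_stdSimplex ℝ X).inter L.convex
  have hμ0ne : ∀ x, μ0 x ≠ 0 := fun x => (hμ0pos x).ne'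
  have hpath : IsCentralPath (linVal c) (klDiv · μ0) P μ := fun t ht => ⟨hμP t ht, hcp t ht⟩
  subst hF
  obtain ⟨hμhatP, hμhatmax⟩ := hhatF
  refine hPcompact.tendsto_nhds_of_unique_mapClusterPt ((eventually_gt_atTop 0).mono hμP)
    fun a haP ha => ?_
  obtain ⟨hamax, haKL⟩ := hpath.mapClusterPt hμhatP hμhatmax hPcompact
    (continuous_linVal c) (continuous_klDiv_left hμ0ne) ha
  have hKL : StrictConvexOn ℝ {p | p ∈ P ∧ ∀ q ∈ P, linVal c q ≤ linVal c p} (klDiv · μ0) :=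
    (strictConvexOn_klDiv_left hμ0ne).subset (fun p hp x _ => (hPsimplex ▸ hp.1).1.1 x)
      (concaveOn_linVal c hPconvex).convex_setOf_isMaxOn
  exact hKL.eq_of_isMinOn (fun p hp => haKL.trans (hhatmin p hp)) hhatmin ⟨haP, hamax⟩
    ⟨hμhatP, hμhatmax⟩

theorem stmt13 {X : Type*} [Fintype X]
    (c : X → ℝ) (L : AffineSubspace ℝ (X → ℝ))
    -- `P = Δ_X ∩ L`
    (P : Set (X → ℝ)) (hP : P = {p | (∀ x, 0 ≤ p x) ∧ ∑ x, p x = 1 ∧ p ∈ L})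
    -- the Fisher-Rao gradient flow `(μ_t)_{t≥0}`, started at `μ_0 ∈ P ∩ ℝ^X_{>0}`,
    -- encoded via the central path property
    (μ : ℝ → X → ℝ) (μ0 : X → ℝ)
    (hinit : μ 0 = μ0) (hμ0pos : ∀ x, 0 < μ0 x) (hμ0P : μ0 ∈ P)
    (hμP : ∀ t > (0:ℝ), μ t ∈ P) (hpos : ∀ t > (0:ℝ), ∀ x, 0 < μ t x)
    (hcp : ∀ t > (0:ℝ), ∀ p ∈ P,
      linVal c p - t⁻¹ * klDiv p μ0 ≤ linVal c (μ t) - t⁻¹ * klDiv (μ t) μ0)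
    -- `F*` is the face of maximizers
    (Fstar : Set (X → ℝ))
    (hF : Fstar = {p | p ∈ P ∧ ∀ q ∈ P, linVal c q ≤ linVal c p})
    -- `μ̂` is the information projection of `μ_0` to `F*`
    (μhat : X → ℝ) (hhatF : μhat ∈ Fstar)
    (hhatmin : ∀ p ∈ Fstar, klDiv μhat μ0 ≤ klDiv p μ0) :
    Tendsto μ atTop (nhds μhat) :=
  stmt13_general c L P hP μ μ0 hμ0pos hμP hcp Fstar hF μhat hhatF hhatmin
end
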